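/- arXiv:math/0501476 — 3 statements merged into one kernel-verified Lean document; each statement's English description precedes it below -/
import Mathlib

section
/- If ≺ is a well-founded strict linear order on ℕ, then the derived order ≺' is again a well-founded strict linear order on ℕ. Consequently, by recursion, every order <_m (m ≥ 1) is a well-founded strict linear order on ℕ. -/
/-- `ν n` is the exponent of 2 in `n + 1` (the 2-adic valuation of `n+1`). -/
def nuFn (n : ℕ) : ℕ := (n + 1).factorization 2

/-- `θ n = ((n+1) / 2 ^ ν n - 1) / 2`, so that `n + 1 = 2 ^ ν n * (2 * θ n + 1)`. -/
def thetaFn (n : ℕ) : ℕ := ((n + 1) / 2 ^ nuFn n - 1) / 2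

/-- The order `<₁` on ℕ : compare the pairs `(ν n, θ n)` lexicographically. -/
def lt1 (n n' : ℕ) : Prop :=
  Prod.Lex (· < ·) (· < ·) (nuFn n, thetaFn n) (nuFn n', thetaFn n')

/-- `DecExpList r n l` : `l` lists the exponents of the binary expansion of `n`
in `r`-decreasing order. -/
def DecExpList (r : ℕ → ℕ → Prop) (n : ℕ) (l : List ℕ) : Prop :=
  l.Chain' (fun a b => r b a) ∧ ∀ i : ℕ, i ∈ l ↔ n.testBit i

/-- The derived order `≺'` : compare the `r`-decreasing lists of binary exponents
lexicographically (via `List.Lex`, a proper initial segment counting as smaller):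
either the lists agree up to position `k` and then `r` holds at position `k`, or the
first list is a proper prefix of the second. -/
def derivedOrder (r : ℕ → ℕ → Prop) (n n' : ℕ) : Prop :=
  ∃ l l' : List ℕ, DecExpList r n l ∧ DecExpList r n' l' ∧ List.Lex r l l'

/-- The orders `<_m` on ℕ (for `m ≥ 1`): `<₁` is `lt1`, and `<_{m+1}` is the
derived order of `<_m`.  (The value at `m = 0` is irrelevant; we set it to `lt1`.) -/
def ltm : ℕ → ℕ → ℕ → Prop
  | 0 => lt1
  | 1 => lt1
  | (m + 2) => derivedOrder (ltm (m + 1))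

section Aux

variable {r : ℕ → ℕ → Prop}

private theorem flipTrans (hsto : IsStrictTotalOrder ℕ r) :
    IsTrans ℕ (fun a b => r b a) :=
  ⟨fun _ _ _ h1 h2 => hsto.trans _ _ _ h2 h1⟩

/-- A chain'-decreasing list is pairwise decreasing. -/
private theorem chainPairwise (hsto : IsStrictTotalOrder ℕ r) {l : List ℕ}
    (h : l.Chain' (fun a b => r b a)) : l.Pairwise (fun a b => r b a) := by
  haveI := flipTrans hsto
  exact List.isChain_iff_pairwise.mp h

private theorem chainNodup (hsto : IsStrictTotalOrder ℕ r) {l : List ℕ}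
    (h : l.Chain' (fun a b => r b a)) : l.Nodup := by
  refine (chainPairwise hsto h).imp ?_
  intro a b hr
  rintro rfl
  exact hsto.irrefl _ hr

/-- Uniqueness of the decreasing exponent list. -/
theorem decExpList_unique (hsto : IsStrictTotalOrder ℕ r) {n : ℕ} {l l' : List ℕ}
    (h : DecExpList r n l) (h' : DecExpList r n l') : l = l' := by
  haveI : IsAntisymm ℕ (fun a b => r b a) :=
    ⟨fun a b h1 h2 => absurd h1 (asymm_of r h2)⟩
  have hperm : List.Perm l l' := by
    refine (List.perm_ext_iff_of_nodup (chainNodup hsto h.1) (chainNodup hsto h'.1)).mpr ?_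
    intro a; rw [h.2 a, h'.2 a]
  exact List.Perm.eq_of_pairwise' (chainPairwise hsto h.1) (chainPairwise hsto h'.1) hperm

/-- The number is determined by its exponent list. -/
theorem decExpList_inj {n n' : ℕ} {l : List ℕ}
    (h : DecExpList r n l) (h' : DecExpList r n' l) : n = n' := by
  refine Nat.eq_of_testBit_eq fun i => ?_
  have := ((h.2 i).symm.trans (h'.2 i))
  exact Bool.eq_iff_iff.mpr this

/-- Existence of the decreasing exponent list. -/
theorem decExpList_exists (hsto : IsStrictTotalOrder ℕ r) (n : ℕ) :
    ∃ l, DecExpList r n l := by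
  classical
  haveI := hsto
  let s : ℕ → ℕ → Prop := fun a b => r b a ∨ a = b
  haveI : IsTrans ℕ s := by
    constructor
    rintro a b c (h1 | rfl) (h2 | rfl)
    · exact Or.inl (trans_of r h2 h1)
    · exact Or.inl h1
    · exact Or.inl h2
    · exact Or.inr rfl
  haveI : IsAntisymm ℕ s := by
    constructor
    rintro a b (h1 | rfl) h2
    · rcases h2 with h2 | rfl
      · exact absurd h1 (asymm_of r h2)
      · exact absurd h1 (irrefl_of r _)
    · rfl
  haveI : IsTotal ℕ s := by
    constructor
    intro a b
    rcases trichotomous_of r a b with h | rfl | h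
    · exact Or.inr (Or.inl h)
    · exact Or.inl (Or.inr rfl)
    · exact Or.inl (Or.inl h)
  let S : Finset ℕ := (Finset.range (n + 1)).filter (fun i => n.testBit i)
  refine ⟨S.sort s, ?_, ?_⟩
  · haveI := flipTrans hsto
    refine List.isChain_iff_pairwise.mpr ?_
    have h1 : (S.sort s).Pairwise s := Finset.pairwise_sort S s
    have h2 : (S.sort s).Nodup := Finset.sort_nodup S s
    refine (h1.and h2).imp ?_
    rintro a b ⟨h | rfl, hne⟩
    · exact h
    · exact absurd rfl hne
  · intro i
    rw [Finset.mem_sort]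
    simp only [S, Finset.mem_filter, Finset.mem_range]
    constructor
    · rintro ⟨-, h⟩; exact h
    · intro h
      refine ⟨?_, h⟩
      by_contra hlt
      push_neg at hlt
      have : n < 2 ^ i := lt_of_lt_of_le (by omega : n < i) (Nat.le_of_lt (Nat.lt_two_pow_self (n := i)))
      rw [Nat.testBit_eq_false_of_lt this] at h
      exact absurd h (by simp)

private theorem bound_of_chain (hsto : IsStrictTotalOrder ℕ r) {b : ℕ} {s : List ℕ}
    (h : (b :: s).Chain' (fun a c => r c a)) : ∀ x ∈ b :: s, r x b ∨ x = b := by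
  have hp := chainPairwise hsto h
  intro x hx
  rcases List.mem_cons.mp hx with rfl | hx
  · exact Or.inr rfl
  · exact Or.inl ((List.pairwise_cons.mp hp).1 x hx)

private theorem strict_bound_of_chain (hsto : IsStrictTotalOrder ℕ r) {b : ℕ} {s : List ℕ}
    (h : (b :: s).Chain' (fun a c => r c a)) : ∀ x ∈ s, r x b :=
  (List.pairwise_cons.mp (chainPairwise hsto h)).1

/-- Characterization of the derived order via any chosen lists. -/
theorem derivedOrder_iff (hsto : IsStrictTotalOrder ℕ r) {n n' : ℕ} {l l' : List ℕ}
    (h : DecExpList r n l) (h' : DecExpList r n' l') :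
    derivedOrder r n n' ↔ List.Lex r l l' := by
  constructor
  · rintro ⟨m, m', hm, hm', hlex⟩
    rwa [decExpList_unique hsto hm h, decExpList_unique hsto hm' h'] at hlex
  · intro hlex
    exact ⟨l, l', h, h', hlex⟩

theorem derived_sto (hsto : IsStrictTotalOrder ℕ r) :
    IsStrictTotalOrder ℕ (derivedOrder r) := by
  haveI := hsto
  classical
  have L : ∀ n, DecExpList r n (Classical.choose (decExpList_exists hsto n)) :=
    fun n => Classical.choose_spec (decExpList_exists hsto n)
  refine { trichotomous := ?_, irrefl := ?_, trans := ?_ }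
  · -- trichotomous
    intro n n'
    suffices hs : derivedOrder r n n' ∨ n = n' ∨ derivedOrder r n' n from fun h1 h2 =>
      hs.elim (fun h => absurd h h1) (fun h => h.elim id (fun h => absurd h h2))
    rcases eq_or_ne n n' with rfl | hne
    · exact Or.inr (Or.inl rfl)
    have hL : Classical.choose (decExpList_exists hsto n) ≠
        Classical.choose (decExpList_exists hsto n') := by
      intro he
      exact hne (decExpList_inj (L n) (he ▸ L n'))
    rcases trichotomous_of (List.Lex r) (Classical.choose (decExpList_exists hsto n))
      (Classical.choose (decExpList_exists hsto n')) with h | h | h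
    · exact Or.inl ((derivedOrder_iff hsto (L n) (L n')).mpr h)
    · exact absurd h hL
    · exact Or.inr (Or.inr ((derivedOrder_iff hsto (L n') (L n)).mpr h))
  · -- irrefl
    intro n hn
    exact irrefl_of (List.Lex r) _ ((derivedOrder_iff hsto (L n) (L n)).mp hn)
  · -- trans
    intro a b c hab hbc
    exact (derivedOrder_iff hsto (L a) (L c)).mpr
      (List.lex_trans (fun h1 h2 => trans_of r h1 h2) ((derivedOrder_iff hsto (L a) (L b)).mp hab)
        ((derivedOrder_iff hsto (L b) (L c)).mp hbc))

theorem derived_wf (hsto : IsStrictTotalOrder ℕ r) (hwf : WellFounded r) :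
    WellFounded (derivedOrder r) := by
  haveI := hsto
  classical
  let D := {l : List ℕ // l.Chain' (fun a b => r b a)}
  let R : D → D → Prop := fun l l' => List.Lex r l.1 l'.1
  have acc_nil : ∀ h, Acc R ⟨[], h⟩ := fun h =>
    ⟨_, fun y hy => absurd hy List.not_lex_nil⟩
  have key : ∀ a : ℕ, ∀ l : D, (∀ x ∈ l.1, r x a ∨ x = a) → Acc R l := by
    intro a
    induction a using hwf.induction with
    | _ a IH =>
      have acc_strict : ∀ l : D, (∀ x ∈ l.1, r x a) → Acc R l := by
        rintro ⟨m, hm⟩ hl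
        cases m with
        | nil => exact acc_nil hm
        | cons b s =>
          exact IH b (hl b (List.mem_cons_self)) ⟨b :: s, hm⟩ (bound_of_chain hsto hm)
      have claim : ∀ t : D, Acc R t → (∀ x ∈ t.1, r x a) →
          ∀ h : (a :: t.1).Chain' (fun u v => r v u), Acc R ⟨a :: t.1, h⟩ := by
        intro t ht
        induction ht with
        | intro t2 _ ih =>
          intro hbd hch
          constructor
          rintro ⟨m, hm⟩ hlt
          cases m with
          | nil => exact acc_nil hm
          | cons b s =>
            cases hlt with
            | rel hb =>
              refine acc_strict ⟨b :: s, hm⟩ ?_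
              intro x hx
              rcases bound_of_chain hsto hm x hx with h | rfl
              · exact trans_of r h hb
              · exact hb
            | cons hs =>
              exact ih ⟨s, List.IsChain.tail hm⟩ hs (strict_bound_of_chain hsto hm) hm
      rintro ⟨m, hm⟩ hl
      by_cases ha : a ∈ m
      · cases m with
        | nil => cases ha
        | cons b s =>
          have hba : b = a := by
            rcases List.mem_cons.mp ha with rfl | ha'
            · rfl
            · have h1 : r a b := strict_bound_of_chain hsto hm a ha'
              rcases hl b (List.mem_cons_self) with h2 | rfl
              · exact absurd h1 (asymm_of r h2)
              · exact absurd h1 (irrefl_of r _)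
          subst hba
          exact claim ⟨s, List.IsChain.tail hm⟩
            (acc_strict ⟨s, List.IsChain.tail hm⟩ (strict_bound_of_chain hsto hm))
            (strict_bound_of_chain hsto hm) hm
      · refine acc_strict ⟨m, hm⟩ ?_
        intro x hx
        rcases hl x hx with h | rfl
        · exact h
        · exact absurd hx ha
  have hwfR : WellFounded R := by
    constructor
    rintro ⟨m, hm⟩
    cases m with
    | nil => exact acc_nil hm
    | cons a s => exact key a ⟨a :: s, hm⟩ (bound_of_chain hsto hm)
  have L : ∀ n, DecExpList r n (Classical.choose (decExpList_exists hsto n)) :=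
    fun n => Classical.choose_spec (decExpList_exists hsto n)
  let F : ℕ → D := fun n => ⟨Classical.choose (decExpList_exists hsto n), (L n).1⟩
  refine Subrelation.wf (r := InvImage R F) ?_ (InvImage.wf F hwfR)
  intro n n' h
  exact (derivedOrder_iff hsto (L n) (L n')).mp h

end Aux

theorem nuFn_thetaFn_eq (n : ℕ) : n + 1 = 2 ^ nuFn n * (2 * thetaFn n + 1) := by
  have h1 : 2 ^ nuFn n ∣ n + 1 := Nat.ordProj_dvd (n + 1) 2
  have h2 : ¬ 2 ∣ (n + 1) / 2 ^ nuFn n :=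
    Nat.not_dvd_ordCompl Nat.prime_two (Nat.succ_ne_zero n)
  have h3 : (n + 1) / 2 ^ nuFn n % 2 = 1 := Nat.two_dvd_ne_zero.mp h2
  have h4 : 2 ^ nuFn n * ((n + 1) / 2 ^ nuFn n) = n + 1 := Nat.mul_div_cancel' h1
  have h5 : 2 * thetaFn n + 1 = (n + 1) / 2 ^ nuFn n := by
    simp only [thetaFn]
    generalize hg : (n + 1) / 2 ^ nuFn n = mm at h3 ⊢
    omega
  rw [h5, h4]

theorem nuFn_thetaFn_inj {n n' : ℕ} (h1 : nuFn n = nuFn n') (h2 : thetaFn n = thetaFn n') :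
    n = n' := by
  have := nuFn_thetaFn_eq n
  rw [h1, h2, ← nuFn_thetaFn_eq n'] at this
  omega

theorem lt1_sto : IsStrictTotalOrder ℕ lt1 := by
  haveI : IsWellOrder (ℕ × ℕ) (Prod.Lex (· < · : ℕ → ℕ → Prop) (· < ·)) := inferInstance
  refine { trichotomous := ?_, irrefl := ?_, trans := ?_ }
  · intro n n'
    suffices hs : lt1 n n' ∨ n = n' ∨ lt1 n' n from fun h1 h2 =>
      hs.elim (fun h => absurd h h1) (fun h => h.elim id (fun h => absurd h h2))
    rcases eq_or_ne n n' with rfl | hne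
    · exact Or.inr (Or.inl rfl)
    rcases trichotomous_of (Prod.Lex (· < · : ℕ → ℕ → Prop) (· < ·))
      (nuFn n, thetaFn n) (nuFn n', thetaFn n') with h | h | h
    · exact Or.inl h
    · exact absurd (nuFn_thetaFn_inj (Prod.mk.inj h).1 (Prod.mk.inj h).2) hne
    · exact Or.inr (Or.inr h)
  · intro n hn
    exact irrefl_of (Prod.Lex (· < · : ℕ → ℕ → Prop) (· < ·)) _ hn
  · intro a b c hab hbc
    exact trans_of (Prod.Lex (· < · : ℕ → ℕ → Prop) (· < ·)) hab hbc

theorem lt1_wf : WellFounded lt1 :=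
  InvImage.wf (fun n => (nuFn n, thetaFn n))
    (IsWellFounded.wf (r := Prod.Lex (· < · : ℕ → ℕ → Prop) (· < · : ℕ → ℕ → Prop)))

/-- If `≺` is a well-founded strict linear order on ℕ, so is the derived order `≺'`;
consequently every `<_m` (`m ≥ 1`) is a well-founded strict linear order on ℕ. -/
theorem derivedOrder_wellOrder_and_ltm_wellOrder :
    (∀ r : ℕ → ℕ → Prop, IsStrictTotalOrder ℕ r → WellFounded r →
      IsStrictTotalOrder ℕ (derivedOrder r) ∧ WellFounded (derivedOrder r)) ∧
    (∀ m : ℕ, 1 ≤ m → IsStrictTotalOrder ℕ (ltm m) ∧ WellFounded (ltm m)) := by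
  have part1 : ∀ r : ℕ → ℕ → Prop, IsStrictTotalOrder ℕ r → WellFounded r →
      IsStrictTotalOrder ℕ (derivedOrder r) ∧ WellFounded (derivedOrder r) :=
    fun r hsto hwf => ⟨derived_sto hsto, derived_wf hsto hwf⟩
  refine ⟨part1, ?_⟩
  have H : ∀ m : ℕ, IsStrictTotalOrder ℕ (ltm (m + 1)) ∧ WellFounded (ltm (m + 1)) := by
    intro m
    induction m with
    | zero => exact ⟨lt1_sto, lt1_wf⟩
    | succ k ih => exact part1 (ltm (k + 1)) ih.1 ih.2
  intro m hm
  match m, hm with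
  | (k + 1), _ => exact H k
end

section
/- For every m ≥ 1, the coding f(·, m) is a bijection from T_m (the ordinals of type m) onto ℕ, and it is an order isomorphism from T_m with the restriction of the ordinal order onto ℕ equipped with the order <_m. -/
/-- The ordinals of type `m`: `T₁ = {ω·a + b : a b ∈ ℕ}`, and `T_{m+1}` consists of
the sums `ω^{α₁} + ⋯ + ω^{α_i}` with `α₁ > ⋯ > α_i` all in `T_m` (empty sum = 0). -/
def OrdType : ℕ → Set Ordinal
  | 0 => ∅
  | 1 => {o | ∃ a b : ℕ, o = Ordinal.omega0 * a + b}
  | (m + 2) => {o | ∃ l : List Ordinal, l.Chain' (· > ·) ∧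
      (∀ α ∈ l, α ∈ OrdType (m + 1)) ∧
      o = (l.map fun α => Ordinal.omega0 ^ α).sum}

open Ordinal List

/-! ### Arithmetic lemmas about the pairing `(a,b) ↦ 2^a(2b+1) - 1` -/

lemma code_pos (a b : ℕ) : 0 < 2 ^ a * (2 * b + 1) := by positivity

lemma nuFn_code (a b : ℕ) : nuFn (2 ^ a * (2 * b + 1) - 1) = a := by
  have h : 2 ^ a * (2 * b + 1) - 1 + 1 = 2 ^ a * (2 * b + 1) :=
    Nat.succ_pred_eq_of_pos (code_pos a b)
  have h2 : ¬ (2 ∣ (2 * b + 1)) := by omega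
  unfold nuFn
  rw [h, Nat.factorization_mul (by positivity) (by positivity)]
  simp [Nat.Prime.factorization_pow Nat.prime_two,
    Nat.factorization_eq_zero_of_not_dvd h2]

lemma thetaFn_code (a b : ℕ) : thetaFn (2 ^ a * (2 * b + 1) - 1) = b := by
  have h : 2 ^ a * (2 * b + 1) - 1 + 1 = 2 ^ a * (2 * b + 1) :=
    Nat.succ_pred_eq_of_pos (code_pos a b)
  unfold thetaFn
  rw [h, nuFn_code, Nat.mul_div_cancel_left _ (by positivity)]
  omega

lemma code_succ (n : ℕ) : 2 ^ nuFn n * (2 * thetaFn n + 1) = n + 1 := by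
  have hd : 2 ^ nuFn n * ((n + 1) / 2 ^ nuFn n) = n + 1 :=
    Nat.ordProj_mul_ordCompl_eq_self (n + 1) 2
  have hodd : ¬ (2 ∣ (n + 1) / 2 ^ nuFn n) :=
    Nat.not_dvd_ordCompl Nat.prime_two (Nat.succ_ne_zero n)
  have hq : 2 * thetaFn n + 1 = (n + 1) / 2 ^ nuFn n := by
    unfold thetaFn
    generalize (n + 1) / 2 ^ nuFn n = X at hodd ⊢
    omega
  rw [hq, hd]

/-! ### Bit indices -/

lemma mem_bitIndices_iff {n i : ℕ} : i ∈ n.bitIndices ↔ n.testBit i := by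
  induction n using Nat.binaryRec generalizing i with
  | zero => simp
  | bit b n ih =>
    cases b
    · rw [Nat.bitIndices_bit_false]
      cases i with
      | zero => rw [Nat.testBit_bit_zero]; simp
      | succ i => rw [Nat.testBit_bit_succ]; simpa using ih
    · rw [Nat.bitIndices_bit_true]
      cases i with
      | zero => rw [Nat.testBit_bit_zero]; simp
      | succ i => rw [Nat.testBit_bit_succ]; simpa using ih

lemma testBit_twoPowSum {e : List ℕ} (he : e.Nodup) (i : ℕ) :
    ((e.map fun j => 2 ^ j).sum).testBit i ↔ i ∈ e := by
  classical
  set e' := Finset.sort e.toFinset (· ≤ ·) with he'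
  have hperm : e.Perm e' :=
    List.perm_of_nodup_nodup_toFinset_eq he (Finset.sort_nodup _ _)
      (by rw [he', Finset.sort_toFinset])
  have hsum : (e.map fun j => 2 ^ j).sum = (e'.map fun j => 2 ^ j).sum :=
    (hperm.map _).sum_eq
  rw [hsum, ← mem_bitIndices_iff, Nat.bitIndices_twoPowsum (Finset.sortedLT_sort _)]
  exact hperm.mem_iff.symm

/-! ### Ordinal lemmas -/

lemma omegaMulAdd_lt_of {a b a' b' : ℕ} (h : a < a' ∨ (a = a' ∧ b < b')) :
    Ordinal.omega0 * a + b < Ordinal.omega0 * a' + b' := by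
  rcases h with h | ⟨rfl, h⟩
  · calc Ordinal.omega0 * a + b < Ordinal.omega0 * a + Ordinal.omega0 :=
          add_lt_add_right (Ordinal.nat_lt_omega0 b) _
      _ = Ordinal.omega0 * ((a : Ordinal) + 1) := by rw [mul_add_one]
      _ ≤ Ordinal.omega0 * a' :=
          mul_le_mul_right (by exact_mod_cast Nat.succ_le_of_lt h) _
      _ ≤ Ordinal.omega0 * a' + b' := le_self_add
  · exact add_lt_add_right (by exact_mod_cast h) _

lemma omegaMulAdd_lt {a b a' b' : ℕ} :
    Ordinal.omega0 * a + b < Ordinal.omega0 * a' + b' ↔ (a < a' ∨ (a = a' ∧ b < b')) := by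
  constructor
  · intro h
    rcases lt_trichotomy a a' with h1 | h1 | h1
    · exact Or.inl h1
    · subst h1
      refine Or.inr ⟨rfl, ?_⟩
      have := (add_lt_add_iff_left (Ordinal.omega0 * (a : Ordinal))).1 h
      exact_mod_cast this
    · exact absurd (omegaMulAdd_lt_of (Or.inl h1)) (lt_asymm h)
  · exact omegaMulAdd_lt_of

lemma omegaMulAdd_inj {a b a' b' : ℕ}
    (h : Ordinal.omega0 * a + b = Ordinal.omega0 * a' + b') : a = a' ∧ b = b' := by
  rcases lt_trichotomy a a' with h1 | h1 | h1
  · exact absurd (omegaMulAdd_lt_of (Or.inl h1)) (by rw [h]; exact lt_irrefl _)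
  · subst h1
    refine ⟨rfl, ?_⟩
    by_contra hb
    rcases Nat.lt_or_ge b b' with h2 | h2
    · exact absurd (omegaMulAdd_lt_of (Or.inr ⟨rfl, h2⟩)) (by rw [h]; exact lt_irrefl _)
    · have h3 : b' < b := by omega
      exact absurd (omegaMulAdd_lt_of (Or.inr ⟨rfl, h3⟩)) (by rw [h]; exact lt_irrefl _)
  · exact absurd (omegaMulAdd_lt_of (Or.inl h1)) (by rw [← h]; exact lt_irrefl _)

lemma sum_opow_lt_opow {l : List Ordinal} {a : Ordinal} (h : ∀ x ∈ l, x < a) :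
    ((l.map fun β => Ordinal.omega0 ^ β).sum) < Ordinal.omega0 ^ a := by
  induction l with
  | nil => simpa using Ordinal.opow_pos a Ordinal.omega0_pos
  | cons x s ih =>
    simp only [List.map_cons, List.sum_cons]
    exact Ordinal.principal_add_omega0_opow a
      ((Ordinal.opow_lt_opow_iff_right Ordinal.one_lt_omega0).2 (h x List.mem_cons_self))
      (ih fun y hy => h y (List.mem_cons_of_mem _ hy))

lemma lex_cons_iff' {α} {r : α → α → Prop} {a a' : α} {s t : List α} :
    List.Lex r (a :: s) (a' :: t) ↔ r a a' ∨ (a = a' ∧ List.Lex r s t) := by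
  constructor
  · intro h
    cases h with
    | rel h => exact Or.inl h
    | cons h => exact Or.inr ⟨rfl, h⟩
  · rintro (h | ⟨rfl, h⟩)
    · exact List.Lex.rel h
    · exact List.Lex.cons h

lemma chain'_gt_head {l : List Ordinal} {a : Ordinal} (h : (a :: l).Chain' (· > ·)) :
    ∀ x ∈ l, x < a := by
  have := List.isChain_iff_pairwise.1 h
  exact fun x hx => (List.pairwise_cons.1 this).1 x hx

lemma sum_opow_lt_sum_opow {l l' : List Ordinal}
    (hl : l.Chain' (· > ·)) (hl' : l'.Chain' (· > ·)) :
    (l.map fun β => Ordinal.omega0 ^ β).sum < (l'.map fun β => Ordinal.omega0 ^ β).sum ↔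
      List.Lex (· < ·) l l' := by
  induction l generalizing l' with
  | nil =>
    cases l' with
    | nil => simp [List.not_lex_nil]
    | cons a' t =>
      apply iff_of_true _ List.Lex.nil
      simp only [List.map_nil, List.sum_nil, List.map_cons, List.sum_cons]
      exact lt_of_lt_of_le (Ordinal.opow_pos a' Ordinal.omega0_pos) (le_self_add)
  | cons a s ih =>
    cases l' with
    | nil =>
      apply iff_of_false _ List.not_lex_nil
      simp only [List.map_nil, List.sum_nil]
      simp
    | cons a' t =>
      have hs : s.Chain' (· > ·) := hl.tail
      have ht : t.Chain' (· > ·) := hl'.tail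
      rcases lt_trichotomy a a' with h | h | h
      · apply iff_of_true _ (List.Lex.rel h)
        calc ((a :: s).map fun β => Ordinal.omega0 ^ β).sum < Ordinal.omega0 ^ a' := by
              apply sum_opow_lt_opow
              intro x hx
              rcases List.mem_cons.1 hx with rfl | hx
              · exact h
              · exact lt_trans (chain'_gt_head hl x hx) h
          _ ≤ ((a' :: t).map fun β => Ordinal.omega0 ^ β).sum := by
              simp only [List.map_cons, List.sum_cons]
              exact le_self_add
      · subst h
        simp only [List.map_cons, List.sum_cons]
        rw [add_lt_add_iff_left, lex_cons_iff', ih hs ht]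
        simp [lt_irrefl]
      · apply iff_of_false
        · rw [not_lt]
          calc ((a' :: t).map fun β => Ordinal.omega0 ^ β).sum ≤ Ordinal.omega0 ^ a := by
                apply le_of_lt
                apply sum_opow_lt_opow
                intro x hx
                rcases List.mem_cons.1 hx with rfl | hx
                · exact h
                · exact lt_trans (chain'_gt_head hl' x hx) h
            _ ≤ ((a :: s).map fun β => Ordinal.omega0 ^ β).sum := by
                simp only [List.map_cons, List.sum_cons]
                exact le_self_add
        · intro hlex
          rcases lex_cons_iff'.1 hlex with h2 | ⟨rfl, _⟩
          · exact lt_asymm h h2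
          · exact lt_irrefl _ h

lemma sum_opow_inj {l l' : List Ordinal}
    (hl : l.Chain' (· > ·)) (hl' : l'.Chain' (· > ·))
    (h : (l.map fun β => Ordinal.omega0 ^ β).sum = (l'.map fun β => Ordinal.omega0 ^ β).sum) :
    l = l' := by
  by_contra hne
  rcases trichotomous_of (List.Lex (· < · : Ordinal → Ordinal → Prop)) l l' with h1 | h1 | h1
  · exact absurd ((sum_opow_lt_sum_opow hl hl').2 h1) (by rw [h]; exact lt_irrefl _)
  · exact hne h1
  · exact absurd ((sum_opow_lt_sum_opow hl' hl).2 h1) (by rw [h]; exact lt_irrefl _)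

lemma lex_map_iff {α β : Type*} {r : α → α → Prop} {s : β → β → Prop} {f : α → β}
    {P : α → Prop}
    (hiff : ∀ a, P a → ∀ b, P b → (r a b ↔ s (f a) (f b)))
    (hinj : ∀ a, P a → ∀ b, P b → f a = f b → a = b) :
    ∀ {l l' : List α}, (∀ x ∈ l, P x) → (∀ x ∈ l', P x) →
      (List.Lex r l l' ↔ List.Lex s (l.map f) (l'.map f)) := by
  intro l
  induction l with
  | nil =>
    intro l' _ _
    cases l' with
    | nil => simp
    | cons a' t => simp [List.Lex.nil]
  | cons a t ih =>
    intro l' hml hml'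
    cases l' with
    | nil =>
      simp only [List.map_nil, List.map_cons]
      exact iff_of_false List.not_lex_nil List.not_lex_nil
    | cons a' t' =>
      simp only [List.map_cons]
      rw [lex_cons_iff', lex_cons_iff']
      have ha : P a := hml a List.mem_cons_self
      have ha' : P a' := hml' a' List.mem_cons_self
      constructor
      · rintro (h | ⟨rfl, h⟩)
        · exact Or.inl ((hiff a ha a' ha').1 h)
        · exact Or.inr ⟨rfl, (ih (fun x hx => hml x (List.mem_cons_of_mem _ hx))
            (fun x hx => hml' x (List.mem_cons_of_mem _ hx))).1 h⟩
      · rintro (h | ⟨he, h⟩)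
        · exact Or.inl ((hiff a ha a' ha').2 h)
        · have : a = a' := hinj a ha a' ha' he
          subst this
          exact Or.inr ⟨rfl, (ih (fun x hx => hml x (List.mem_cons_of_mem _ hx))
            (fun x hx => hml' x (List.mem_cons_of_mem _ hx))).2 h⟩

lemma map_injOn_eq {α β : Type*} {f : α → β} {P : α → Prop}
    (hinj : ∀ a, P a → ∀ b, P b → f a = f b → a = b) :
    ∀ {l l' : List α}, (∀ x ∈ l, P x) → (∀ x ∈ l', P x) → l.map f = l'.map f → l = l' := by
  intro l
  induction l with
  | nil => intro l' _ _ h; cases l' <;> simp_all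
  | cons a t ih =>
    intro l' hml hml' h
    cases l' with
    | nil => simp at h
    | cons a' t' =>
      simp only [List.map_cons, List.cons.injEq] at h
      have : a = a' := hinj a (hml a List.mem_cons_self) a'
        (hml' a' List.mem_cons_self) h.1
      rw [this, ih (fun x hx => hml x (List.mem_cons_of_mem _ hx))
        (fun x hx => hml' x (List.mem_cons_of_mem _ hx)) h.2]

section rprops

variable {r : ℕ → ℕ → Prop}

lemma decExpList_eq (hTrans : ∀ a b c, r a b → r b c → r a c) (hIrr : ∀ a, ¬ r a a)
    {n : ℕ} {l l' : List ℕ} (h : DecExpList r n l) (h' : DecExpList r n l') : l = l' := by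
  haveI i1 : IsTrans ℕ (fun a b => r b a) := ⟨fun a b c h1 h2 => hTrans _ _ _ h2 h1⟩
  haveI i2 : IsAntisymm ℕ (fun a b => r b a) :=
    ⟨fun a b h1 h2 => absurd (hTrans _ _ _ h1 h2) (hIrr _)⟩
  haveI i3 : IsIrrefl ℕ (fun a b => r b a) := ⟨fun a h1 => hIrr a h1⟩
  have p1 : l.Pairwise (fun a b => r b a) := List.isChain_iff_pairwise.1 h.1
  have p2 : l'.Pairwise (fun a b => r b a) := List.isChain_iff_pairwise.1 h'.1
  refine List.Perm.eq_of_pairwise (fun a b _ _ h1 h2 => absurd (hTrans _ _ _ h1 h2) (hIrr _)) p1 p2 ?_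
  refine List.perm_of_nodup_nodup_toFinset_eq p1.nodup p2.nodup ?_
  ext x
  simp only [List.mem_toFinset]
  rw [h.2, h'.2]

end rprops

/-! ### The coding function -/

open scoped Classical in
noncomputable def Fc : ℕ → Ordinal → ℕ
  | 0, _ => 0
  | 1, α =>
    if h : ∃ a b : ℕ, α = Ordinal.omega0 * a + b then
      2 ^ h.choose * (2 * h.choose_spec.choose + 1) - 1
    else 0
  | (m + 2), α =>
    if h : ∃ l : List Ordinal, l.Chain' (· > ·) ∧ (∀ β ∈ l, β ∈ OrdType (m + 1)) ∧
        α = (l.map fun β => Ordinal.omega0 ^ β).sum then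
      (h.choose.map fun β => 2 ^ Fc (m + 1) β).sum
    else 0

lemma Fc_one (a b : ℕ) : Fc 1 (Ordinal.omega0 * a + b) = 2 ^ a * (2 * b + 1) - 1 := by
  have h : ∃ a' b' : ℕ, (Ordinal.omega0 * a + b : Ordinal) = Ordinal.omega0 * a' + b' :=
    ⟨a, b, rfl⟩
  simp only [Fc]
  rw [dif_pos h]
  have key : ∀ a' b' : ℕ, (Ordinal.omega0 * a + b : Ordinal) = Ordinal.omega0 * a' + b' →
      2 ^ a' * (2 * b' + 1) - 1 = 2 ^ a * (2 * b + 1) - 1 := by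
    intro a' b' hab
    obtain ⟨h1, h2⟩ := omegaMulAdd_inj hab
    rw [h1, h2]
  exact key h.choose h.choose_spec.choose h.choose_spec.choose_spec

lemma Fc_step (m : ℕ) {l : List Ordinal} (hc : l.Chain' (· > ·))
    (hm : ∀ β ∈ l, β ∈ OrdType (m + 1)) :
    Fc (m + 2) ((l.map fun β => Ordinal.omega0 ^ β).sum) =
      (l.map fun β => 2 ^ Fc (m + 1) β).sum := by
  have h : ∃ l' : List Ordinal, l'.Chain' (· > ·) ∧ (∀ β ∈ l', β ∈ OrdType (m + 1)) ∧
      (l.map fun β => Ordinal.omega0 ^ β).sum = (l'.map fun β => Ordinal.omega0 ^ β).sum :=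
    ⟨l, hc, hm, rfl⟩
  simp only [Fc]
  rw [dif_pos h]
  obtain ⟨hc', _, hs'⟩ := h.choose_spec
  rw [sum_opow_inj hc' hc hs'.symm]

/-- For every `m ≥ 1`, the coding `f(·, m)` (with `f(ω·a+b, 1) = 2^a(2b+1) - 1` and
`f(ω^{α₁} + ⋯ + ω^{α_i}, m+1) = 2^{f(α₁,m)} + ⋯ + 2^{f(α_i,m)}`) is a bijection from
`T_m` onto ℕ and an order isomorphism from `(T_m, <)` onto `(ℕ, <_m)`. -/
theorem coding_bijective_orderIso :
    ∃ F : Ordinal → ℕ → ℕ,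
      (∀ a b : ℕ, F (Ordinal.omega0 * a + b) 1 = 2 ^ a * (2 * b + 1) - 1) ∧
      (∀ m : ℕ, ∀ l : List Ordinal, l.Chain' (· > ·) →
        (∀ α ∈ l, α ∈ OrdType (m + 1)) →
        F ((l.map fun α => Ordinal.omega0 ^ α).sum) (m + 2) =
          (l.map fun α => 2 ^ F α (m + 1)).sum) ∧
      (∀ m : ℕ, 1 ≤ m →
        Set.BijOn (fun α => F α m) (OrdType m) Set.univ ∧
        (∀ α ∈ OrdType m, ∀ β ∈ OrdType m, (α < β ↔ ltm m (F α m) (F β m)))) := by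
  refine ⟨fun α m => Fc m α, Fc_one, fun m l hc hm => Fc_step m hc hm, ?_⟩
  have key : ∀ m : ℕ,
      Set.BijOn (fun α => Fc (m + 1) α) (OrdType (m + 1)) Set.univ ∧
      (∀ α ∈ OrdType (m + 1), ∀ β ∈ OrdType (m + 1),
        (α < β ↔ ltm (m + 1) (Fc (m + 1) α) (Fc (m + 1) β))) := by
    intro m
    induction m with
    | zero =>
      simp only [Nat.zero_add]
      constructor
      · refine ⟨fun α _ => Set.mem_univ _, ?_, ?_⟩
        · rintro α ⟨a, b, rfl⟩ β ⟨a', b', rfl⟩ h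
          simp only [Fc_one] at h
          have ha := congrArg nuFn h
          have hb := congrArg thetaFn h
          rw [nuFn_code, nuFn_code] at ha
          rw [thetaFn_code, thetaFn_code] at hb
          rw [ha, hb]
        · intro n _
          refine ⟨Ordinal.omega0 * (nuFn n) + (thetaFn n), ⟨nuFn n, thetaFn n, rfl⟩, ?_⟩
          simp only [Fc_one]
          have := code_succ n
          omega
      · rintro α ⟨a, b, rfl⟩ β ⟨a', b', rfl⟩
        simp only [Fc_one]
        show _ ↔ lt1 _ _
        unfold lt1
        rw [Prod.lex_def]
        simp only [nuFn_code, thetaFn_code]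
        exact omegaMulAdd_lt
    | succ k ih =>
      obtain ⟨hbij, hiso⟩ := ih
      have hSurj : ∀ n : ℕ, ∃ α ∈ OrdType (k + 1), Fc (k + 1) α = n := by
        intro n
        obtain ⟨α, hα, hval⟩ := hbij.2.2 (Set.mem_univ n)
        exact ⟨α, hα, hval⟩
      have hInj : ∀ a, a ∈ OrdType (k + 1) → ∀ b, b ∈ OrdType (k + 1) →
          Fc (k + 1) a = Fc (k + 1) b → a = b :=
        fun a ha b hb h => hbij.2.1 ha hb h
      have hiso' : ∀ a, a ∈ OrdType (k + 1) → ∀ b, b ∈ OrdType (k + 1) →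
          (a < b ↔ ltm (k + 1) (Fc (k + 1) a) (Fc (k + 1) b)) :=
        fun a ha b hb => hiso a ha b hb
      have hTrans : ∀ a b c, ltm (k + 1) a b → ltm (k + 1) b c → ltm (k + 1) a c := by
        intro a b c hab hbc
        obtain ⟨α, hα, rfl⟩ := hSurj a
        obtain ⟨β, hβ, rfl⟩ := hSurj b
        obtain ⟨γ, hγ, rfl⟩ := hSurj c
        exact (hiso' α hα γ hγ).1
          (lt_trans ((hiso' α hα β hβ).2 hab) ((hiso' β hβ γ hγ).2 hbc))
      have hIrr : ∀ a, ¬ ltm (k + 1) a a := by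
        intro a h
        obtain ⟨α, hα, rfl⟩ := hSurj a
        exact lt_irrefl α ((hiso' α hα α hα).2 h)
      have hnodupl : ∀ {l : List Ordinal}, l.Chain' (· > ·) → l.Nodup := by
        intro l hc
        exact (List.isChain_iff_pairwise.1 hc).nodup
      have hnodupG : ∀ {l : List Ordinal}, l.Chain' (· > ·) →
          (∀ β ∈ l, β ∈ OrdType (k + 1)) → (l.map (Fc (k + 1))).Nodup := by
        intro l hc hm
        exact List.Nodup.map_on (fun x hx y hy => hInj x (hm x hx) y (hm y hy)) (hnodupl hc)
      have hchainG : ∀ {l : List Ordinal}, l.Chain' (· > ·) →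
          (∀ β ∈ l, β ∈ OrdType (k + 1)) →
          (l.map (Fc (k + 1))).Chain' (fun a b => ltm (k + 1) b a) := by
        intro l hc hm
        show List.IsChain _ (List.map _ _)
        rw [List.isChain_map]
        have hp : l.Pairwise (· > ·) := List.isChain_iff_pairwise.1 hc
        exact (hp.imp_of_mem
          (fun {a b} ha hb hab => (hiso' b (hm b hb) a (hm a ha)).1 hab)).isChain
      have hdec : ∀ {l : List Ordinal}, l.Chain' (· > ·) →
          (∀ β ∈ l, β ∈ OrdType (k + 1)) →
          DecExpList (ltm (k + 1)) (Fc (k + 2) ((l.map fun β => Ordinal.omega0 ^ β).sum))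
            (l.map (Fc (k + 1))) := by
        intro l hc hm
        refine ⟨hchainG hc hm, ?_⟩
        intro i
        rw [Fc_step k hc hm]
        have heq : (l.map fun β => 2 ^ Fc (k + 1) β).sum =
            ((l.map (Fc (k + 1))).map fun j => 2 ^ j).sum := by
          rw [List.map_map]
          rfl
        rw [heq]
        exact (testBit_twoPowSum (hnodupG hc hm) i).symm
      have hiso2 : ∀ α ∈ OrdType (k + 2), ∀ β ∈ OrdType (k + 2),
          (α < β ↔ ltm (k + 2) (Fc (k + 2) α) (Fc (k + 2) β)) := by
        rintro α ⟨l, hc, hm, rfl⟩ β ⟨l', hc', hm', rfl⟩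
        show _ ↔ derivedOrder (ltm (k + 1)) _ _
        rw [sum_opow_lt_sum_opow hc hc',
          lex_map_iff (P := fun x => x ∈ OrdType (k + 1)) hiso' hInj hm hm']
        constructor
        · intro hlex
          exact ⟨l.map (Fc (k + 1)), l'.map (Fc (k + 1)), hdec hc hm, hdec hc' hm', hlex⟩
        · rintro ⟨l₁, l₂, h₁, h₂, hlex⟩
          rw [decExpList_eq hTrans hIrr h₁ (hdec hc hm),
              decExpList_eq hTrans hIrr h₂ (hdec hc' hm')] at hlex
          exact hlex
      refine ⟨⟨fun α _ => Set.mem_univ _, ?_, ?_⟩, hiso2⟩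
      · rintro α ⟨l, hc, hm, rfl⟩ β ⟨l', hc', hm', rfl⟩ h
        simp only at h
        have hdl := hdec hc hm
        have hdl' : DecExpList (ltm (k + 1))
            (Fc (k + 2) ((l.map fun β => Ordinal.omega0 ^ β).sum)) (l'.map (Fc (k + 1))) := by
          rw [h]
          exact hdec hc' hm'
        have hmapeq : l.map (Fc (k + 1)) = l'.map (Fc (k + 1)) :=
          decExpList_eq hTrans hIrr hdl hdl'
        rw [map_injOn_eq hInj hm hm' hmapeq]
      · intro n _
        choose gI hgmem hgval using hSurj
        have hLsort : ((Finset.sort (n.bitIndices.map gI).toFinset (· ≤ ·)).reverse).Pairwise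
            (· > ·) := by
          rw [List.pairwise_reverse]
          exact (Finset.sortedLT_sort _).pairwise
        set L : List Ordinal := (Finset.sort (n.bitIndices.map gI).toFinset (· ≤ ·)).reverse
          with hLdef
        have hLchain : L.Chain' (· > ·) := hLsort.isChain
        have hmemL : ∀ x, x ∈ L ↔ x ∈ n.bitIndices.map gI := by
          intro x
          rw [hLdef, List.mem_reverse, Finset.mem_sort, List.mem_toFinset]
        have hLT : ∀ x ∈ L, x ∈ OrdType (k + 1) := by
          intro x hx
          obtain ⟨i, _, rfl⟩ := List.mem_map.1 ((hmemL x).1 hx)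
          exact hgmem i
        refine ⟨(L.map fun β => Ordinal.omega0 ^ β).sum, ⟨L, hLchain, hLT, rfl⟩, ?_⟩
        simp only
        rw [Fc_step k hLchain hLT]
        have hmapG : (L.map (Fc (k + 1))).Perm n.bitIndices := by
          apply List.perm_of_nodup_nodup_toFinset_eq
          · exact hnodupG hLchain hLT
          · exact Nat.bitIndices_sorted.nodup
          · ext x
            simp only [List.mem_toFinset, List.mem_map]
            constructor
            · rintro ⟨β, hβ, rfl⟩
              obtain ⟨i, hi, rfl⟩ := List.mem_map.1 ((hmemL β).1 hβ)
              rw [hgval i]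
              exact hi
            · intro hx
              exact ⟨gI x, (hmemL _).2 (List.mem_map_of_mem hx), hgval x⟩
        calc (L.map fun β => 2 ^ Fc (k + 1) β).sum
            = ((L.map (Fc (k + 1))).map fun j => 2 ^ j).sum := by rw [List.map_map]; rfl
          _ = (n.bitIndices.map fun j => 2 ^ j).sum := (hmapG.map _).sum_eq
          _ = n := Nat.twoPowSum_bitIndices n
  intro m hm
  obtain ⟨k, rfl⟩ : ∃ k, m = k + 1 := ⟨m - 1, by omega⟩
  exact key k
end

section
/- Let k ∈ ℕ and let S, T : Fin (k+1) → ℕ be the values given by two substitutions to the closed ε-terms a₀, …, a_k of a set of formulas, and define the order (Reduktionsgrad) of an assignment S by o(S) = Σ_{i=0}^{k} 2^{k−i}·f_S(i), where f_S(i) = 1 if S(i) = 0 and f_S(i) = 0 otherwise. If T is progressive over S, i.e., for every i with S(i) ≠ 0 one has T(i) = S(i), then either o(T) < o(S), or S and T give all the ε-terms the same values (S = T as functions). -/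
/-- The order (Reduktionsgrad) of an assignment `S` of values to the closed
ε-terms `a₀, …, a_k` : `o(S) = Σ_{i=0}^{k} 2^{k-i} · f_S(i)`, where `f_S(i) = 1`
iff `S i = 0`. -/
def reduktionsgrad (k : ℕ) (S : Fin (k + 1) → ℕ) : ℕ :=
  ∑ i : Fin (k + 1), 2 ^ (k - (i : ℕ)) * (if S i = 0 then 1 else 0)

/-!
A progressive `T` can only replace zeros of `S` by nonzero values, so the zeros of `T` form a
subset of the zeros of `S`, a proper one unless `S = T`. The order is a sum of positive weights
over the zeros, so it drops strictly; the particular weights `2 ^ (k - i)` play no role here.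
-/

section Progressive

variable {ι M : Type*} [Zero M] {S T : ι → M}

theorem eq_zero_of_progressive (hprog : ∀ i, S i ≠ 0 → T i = S i) {i : ι} (hT : T i = 0) :
    S i = 0 := by
  by_contra hS
  exact hS (hprog i hS ▸ hT)

theorem exists_eq_zero_ne_zero_of_progressive (hprog : ∀ i, S i ≠ 0 → T i = S i) (hne : S ≠ T) :
    ∃ j, S j = 0 ∧ T j ≠ 0 := by
  obtain ⟨j, hj⟩ := Function.ne_iff.mp hne
  have hSj : S j = 0 := by
    by_contra hS
    exact hj (hprog j hS).symm
  exact ⟨j, hSj, fun hTj => hj (hSj.trans hTj.symm)⟩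

theorem sum_weight_mul_zero_indicator_lt_of_progressive [Fintype ι] [DecidableEq M]
    {w : ι → ℕ} (hw : ∀ i, 0 < w i) (hprog : ∀ i, S i ≠ 0 → T i = S i) (hne : S ≠ T) :
    ∑ i, w i * (if T i = 0 then 1 else 0) < ∑ i, w i * (if S i = 0 then 1 else 0) := by
  simp only [mul_ite, mul_one, mul_zero, ← Finset.sum_filter]
  obtain ⟨j, hSj, hTj⟩ := exists_eq_zero_ne_zero_of_progressive hprog hne
  refine Finset.sum_lt_sum_of_subset ?_ (by simpa using hSj) (by simpa using hTj) (hw j)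
    fun _ _ _ => Nat.zero_le _
  intro i hi
  simpa using eq_zero_of_progressive hprog (by simpa using hi)

end Progressive

/-- If `T` is progressive over `S` (every nonzero value of `S` is kept by `T`),
then either `o(T) < o(S)` or `S` and `T` give all ε-terms the same values. -/
theorem progressive_order_decreases (k : ℕ) (S T : Fin (k + 1) → ℕ)
    (hprog : ∀ i : Fin (k + 1), S i ≠ 0 → T i = S i) :
    reduktionsgrad k T < reduktionsgrad k S ∨ S = T :=
  or_iff_not_imp_right.2 fun hne =>
    sum_weight_mul_zero_indicator_lt_of_progressive (fun _ => pow_pos two_pos _) hprog hne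
end
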